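/- Under the PolyCD algorithm with one-dimensional gradient steps on a polytope S = conv{v^1,…,v^M} with diameter D, for f convex and L-smooth on S, the outer iterates satisfy f(x^t) - f* ≤ max{f(x^1) - f*, 16MLD²}/t for all t ≥ 1. -/

import Mathlib

/-!
Within one cycle `y 0, …, y M` of exact line-search steps, the descent lemma and the optimality
of the step size give `f (y (i+1)) + L/2 ‖y (i+1) - y i‖² ≤ f (y i)`, so by Cauchy–Schwarz
`L ‖y i - y 0‖² ≤ 2 i (f (y 0) - f (y i))`. Take the vertex `v (i+1)` minimising the linearisation
of `f` at `y 0`; then `⟪∇f (y 0), v (i+1) - y 0⟫ ≤ f* - f (y 0)`, and Lipschitz continuity of the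
gradient transfers this to `y i` up to an error `L D ‖y i - y 0‖`. The line search along
`v (i+1) - y i` therefore makes a definite progress, and comparing the two effects yields
`h_{t+1}² ≤ 8 M L D² (h_t - h_{t+1})` for the gaps `h_t = f (x t 0) - f*`. This recursion gives
`h_t ≤ max (h_1) (16 M L D²) / t` by induction on `t`.
-/

open scoped RealInnerProductSpace

section Calculus

variable {E : Type*} [NormedAddCommGroup E] [InnerProductSpace ℝ E] [CompleteSpace E]
  {S : Set E} {f : E → ℝ} {g : E → E} {L : ℝ}

theorem HasGradientAt.hasDerivAt_comp_add_smul {g' a u : E} {r : ℝ}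
    (h : HasGradientAt f g' (a + r • u)) :
    HasDerivAt (fun s : ℝ => f (a + s • u)) ⟪g', u⟫ r := by
  have hline : HasDerivAt (fun s : ℝ => a + s • u) u r := by
    simpa using ((hasDerivAt_id r).smul_const u).const_add a
  simpa [InnerProductSpace.toDual_apply_apply, Function.comp_def] using
    h.hasFDerivAt.comp_hasDerivAt r hline

theorem ConvexOn.inner_gradient_le_sub (hf : ConvexOn ℝ S f) {a b g' : E} (ha : a ∈ S)
    (hb : b ∈ S) (hg : HasGradientAt f g' a) : ⟪g', b - a⟫ ≤ f b - f a := by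
  have hline : ConvexOn ℝ (Set.Icc 0 1) (fun s : ℝ => f (a + s • (b - a))) := by
    refine (hf.comp_affineMap (AffineMap.lineMap a b)).subset (fun s hs => ?_)
      (convex_Icc 0 1) |>.congr fun s _ => ?_
    · simpa [AffineMap.lineMap_apply_module', add_comm] using hf.1.add_smul_sub_mem ha hb hs
    · simp [AffineMap.lineMap_apply_module', add_comm]
  have hderiv : HasDerivAt (fun s : ℝ => f (a + s • (b - a))) ⟪g', b - a⟫ 0 :=
    HasGradientAt.hasDerivAt_comp_add_smul (by simpa using hg)
  simpa [slope_def_field] using hline.le_slope_of_hasDerivWithinAt_Ioi (by simp) (by simp)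
    zero_lt_one hderiv.hasDerivWithinAt

theorem ConvexOn.inner_gradient_le_inner_gradient_add (hf : ConvexOn ℝ S f) {a b w ga gb : E}
    (ha : a ∈ S) (hb : b ∈ S) (hgb : HasGradientAt f gb b) (hlip : ‖gb - ga‖ ≤ L * ‖b - a‖) :
    ⟪gb, w - b⟫ ≤ ⟪ga, w - a⟫ + L * ‖b - a‖ * ‖w - a‖ + (f a - f b) := by
  have hsplit : ⟪gb, w - b⟫ = ⟪ga, w - a⟫ + ⟪gb - ga, w - a⟫ + ⟪gb, a - b⟫ := by
    simp only [inner_sub_left, inner_sub_right]; ring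
  have hcs : ⟪gb - ga, w - a⟫ ≤ L * ‖b - a‖ * ‖w - a‖ :=
    (real_inner_le_norm _ _).trans (mul_le_mul_of_nonneg_right hlip (norm_nonneg _))
  linarith [hf.inner_gradient_le_sub hb ha hgb]

theorem ConvexOn.exists_mem_inner_gradient_le (hf : ConvexOn ℝ S f) {T : Set E} (hTS : T ⊆ S)
    {a ga xstar : E} (ha : a ∈ S) (hga : HasGradientAt f ga a) (hxs : xstar ∈ convexHull ℝ T) :
    ∃ w ∈ T, ⟪ga, w - a⟫ ≤ f xstar - f a := by
  obtain ⟨w, hw, hle⟩ := ((innerₗ E ga).concaveOn hf.1).exists_le_of_mem_convexHull hTS hxs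
  refine ⟨w, hw, ?_⟩
  have := hf.inner_gradient_le_sub ha (convexHull_min hTS hf.1 hxs) hga
  simp only [innerₗ_apply_apply] at hle
  rw [inner_sub_right] at this ⊢
  linarith

theorem Convex.le_add_inner_add_of_lipschitz_gradient (hS : Convex ℝ S)
    (hgrad : ∀ y ∈ S, HasGradientAt f (g y) y)
    (hlip : ∀ a ∈ S, ∀ b ∈ S, ‖g a - g b‖ ≤ L * ‖a - b‖) {a b : E} (ha : a ∈ S) (hb : b ∈ S) :
    f b ≤ f a + ⟪g a, b - a⟫ + L / 2 * ‖b - a‖ ^ 2 := by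
  set u := b - a
  have hmem : ∀ r ∈ Set.Icc (0 : ℝ) 1, a + r • u ∈ S := fun r hr => hS.add_smul_sub_mem ha hb hr
  let χ : ℝ → ℝ := fun r => f (a + r • u) - (r * ⟪g a, u⟫ + L / 2 * r ^ 2 * ‖u‖ ^ 2)
  have hχ : ∀ r ∈ Set.Icc (0 : ℝ) 1,
      HasDerivAt χ (⟪g (a + r • u) - g a, u⟫ - L * r * ‖u‖ ^ 2) r := by
    intro r hr
    have hpoly : HasDerivAt (fun r : ℝ => r * ⟪g a, u⟫ + L / 2 * r ^ 2 * ‖u‖ ^ 2)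
        (⟪g a, u⟫ + L * r * ‖u‖ ^ 2) r := by
      refine (((hasDerivAt_id r).mul_const ⟪g a, u⟫).add
        (((hasDerivAt_pow 2 r).const_mul (L / 2)).mul_const (‖u‖ ^ 2))).congr_deriv ?_
      simp only [Nat.cast_ofNat]; ring
    exact ((HasGradientAt.hasDerivAt_comp_add_smul (hgrad _ (hmem r hr))).sub hpoly).congr_deriv
      (by rw [inner_sub_left]; ring)
  have hanti : AntitoneOn χ (Set.Icc 0 1) := by
    refine antitoneOn_of_hasDerivWithinAt_nonpos (convex_Icc 0 1)
      (fun r hr => (hχ r hr).continuousAt.continuousWithinAt)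
      (fun r hr => (hχ r (interior_subset hr)).hasDerivWithinAt) fun r hr => ?_
    rw [interior_Icc] at hr
    have hlip_r : ‖g (a + r • u) - g a‖ ≤ L * (r * ‖u‖) := by
      simpa [norm_smul, abs_of_pos hr.1] using hlip _ (hmem r (Set.Ioo_subset_Icc_self hr)) a ha
    have := (real_inner_le_norm _ _).trans (mul_le_mul_of_nonneg_right hlip_r (norm_nonneg u))
    linarith
  have h01 := hanti (by simp) (by simp) zero_le_one
  have hab : a + u = b := add_sub_cancel a b
  simp only [χ, zero_smul, add_zero, one_smul, hab] at h01
  linarith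

theorem Convex.le_add_smul_sub_of_lipschitz_gradient (hS : Convex ℝ S)
    (hgrad : ∀ y ∈ S, HasGradientAt f (g y) y)
    (hlip : ∀ a ∈ S, ∀ b ∈ S, ‖g a - g b‖ ≤ L * ‖a - b‖) {x v : E} (hx : x ∈ S) (hv : v ∈ S)
    {α : ℝ} (hα : α ∈ Set.Icc (0 : ℝ) 1) :
    f (x + α • (v - x)) ≤ f x + α * ⟪g x, v - x⟫ + L * α ^ 2 / 2 * ‖v - x‖ ^ 2 := by
  have h := hS.le_add_inner_add_of_lipschitz_gradient hgrad hlip hx (hS.add_smul_sub_mem hx hv hα)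
  rw [add_sub_cancel_left, real_inner_smul_right, norm_smul, Real.norm_eq_abs, mul_pow,
    sq_abs] at h
  linarith

end Calculus

theorem mul_add_mul_sq_nonpos_of_isMinOn {c w L α : ℝ} (hL : 0 ≤ L) (hw : 0 ≤ w)
    (hα : α ∈ Set.Icc (0 : ℝ) 1)
    (hmin : IsMinOn (fun β => β * c + L * β ^ 2 / 2 * w) (Set.Icc 0 1) α) :
    α * c + L * α ^ 2 * w ≤ 0 := by
  obtain ⟨hα0, hα1⟩ := hα
  have hk : 0 ≤ L * w := mul_nonneg hL hw
  have hmin' := isMinOn_iff.1 hmin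
  rcases le_or_gt 0 c with hc | hc
  · have h0 := hmin' 0 (by simp)
    nlinarith [mul_nonneg hα0 hc, mul_nonneg (sq_nonneg α) hk]
  rcases le_or_gt (L * w) (-c) with hkc | hkc
  · nlinarith [mul_nonneg hα0 (sub_nonneg.2 hα1)]
  -- otherwise the unconstrained minimiser `-c / (L w)` lies in `[0, 1]`, and `α` must equal it
  have hk' : 0 < L * w := by linarith
  have hr := hmin' (-c / (L * w)) ⟨div_nonneg (by linarith) hk'.le, (div_le_one hk').2 hkc.le⟩
  have hrk : -c / (L * w) * (L * w) = -c := div_mul_cancel₀ _ hk'.ne'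
  have hsq : (L * w * α + c) ^ 2 ≤ 0 := by nlinarith
  have hroot : L * w * α + c = 0 :=
    pow_eq_zero_iff two_ne_zero |>.1 (le_antisymm hsq (sq_nonneg _))
  linear_combination α * hroot

section LineSearch

variable {E : Type*} [NormedAddCommGroup E] [InnerProductSpace ℝ E]

def IsLineSearchStep (L : ℝ) (g : E → E) (x v x' : E) : Prop :=
  ∃ α ∈ Set.Icc (0 : ℝ) 1, x' = x + α • (v - x) ∧
    IsMinOn (fun β => β * ⟪g x, v - x⟫ + L * β ^ 2 / 2 * ‖v - x‖ ^ 2) (Set.Icc 0 1) α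

variable {S : Set E} {f : E → ℝ} {g : E → E} {L : ℝ} {x v x' : E}

namespace IsLineSearchStep

theorem mem (h : IsLineSearchStep L g x v x') (hS : Convex ℝ S) (hx : x ∈ S) (hv : v ∈ S) :
    x' ∈ S := by
  obtain ⟨α, hα, rfl, -⟩ := h
  exact hS.add_smul_sub_mem hx hv hα

variable [CompleteSpace E]

theorem le_add_mul_inner (h : IsLineSearchStep L g x v x') (hS : Convex ℝ S)
    (hgrad : ∀ y ∈ S, HasGradientAt f (g y) y)
    (hlip : ∀ a ∈ S, ∀ b ∈ S, ‖g a - g b‖ ≤ L * ‖a - b‖) (hx : x ∈ S) (hv : v ∈ S)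
    {β : ℝ} (hβ : β ∈ Set.Icc (0 : ℝ) 1) :
    f x' ≤ f x + β * ⟪g x, v - x⟫ + L * β ^ 2 / 2 * ‖v - x‖ ^ 2 := by
  obtain ⟨α, hα, rfl, hmin⟩ := h
  have := hS.le_add_smul_sub_of_lipschitz_gradient hgrad hlip hx hv hα
  linarith [isMinOn_iff.1 hmin β hβ]

theorem add_dist_sq_le (h : IsLineSearchStep L g x v x') (hS : Convex ℝ S)
    (hgrad : ∀ y ∈ S, HasGradientAt f (g y) y)
    (hlip : ∀ a ∈ S, ∀ b ∈ S, ‖g a - g b‖ ≤ L * ‖a - b‖) (hL : 0 ≤ L) (hx : x ∈ S)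
    (hv : v ∈ S) : f x' + L / 2 * dist x x' ^ 2 ≤ f x := by
  obtain ⟨α, hα, rfl, hmin⟩ := h
  have hdesc := hS.le_add_smul_sub_of_lipschitz_gradient hgrad hlip hx hv hα
  have hneg := mul_add_mul_sq_nonpos_of_isMinOn hL (sq_nonneg _) hα hmin
  rw [dist_eq_norm, sub_add_cancel_left, norm_neg, norm_smul, Real.norm_eq_abs, mul_pow, sq_abs]
  linarith

end IsLineSearchStep

end LineSearch

theorem sq_le_mul_of_forall_mul_le_add {e δ P : ℝ} (hP : 0 ≤ P) (he : 0 ≤ e) (hδ : 0 ≤ δ)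
    (H : ∀ β ∈ Set.Icc (0 : ℝ) 1, β * (e / 2 + δ) ≤ δ + P / 2 * β ^ 2) :
    e ^ 2 ≤ 8 * P * δ := by
  have heP : e ≤ P := by linarith [H 1 (by simp)]
  rcases hP.eq_or_lt with rfl | hP
  · simp [le_antisymm heP he]
  have hβ := H (e / (2 * P)) ⟨by positivity, by rw [div_le_one (by positivity)]; linarith⟩
  have hβP : e / (2 * P) * (2 * P) = e := div_mul_cancel₀ _ (by positivity)
  nlinarith [mul_nonneg (div_nonneg he (by positivity : (0:ℝ) ≤ 2 * P)) hδ]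

theorem sq_le_of_forall_mul_sub_le_add {e δ Δ W P m : ℝ} (hP : 0 ≤ P) (he : 0 ≤ e)
    (hδ : 0 ≤ δ) (hδΔ : δ ≤ Δ) (hm : 1 ≤ m) (hW : W ^ 2 ≤ 2 * m * P * Δ)
    (H : ∀ β ∈ Set.Icc (0 : ℝ) 1, β * (e + δ - W) ≤ δ + P / 2 * β ^ 2) :
    e ^ 2 ≤ 8 * m * P * Δ := by
  rcases le_or_gt e (2 * W) with hW' | hW'
  · nlinarith
  have := sq_le_mul_of_forall_mul_le_add hP he hδ fun β hβ => by nlinarith [H β hβ, hβ.1]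
  nlinarith [mul_nonneg hP hδ, mul_le_mul_of_nonneg_left hδΔ hP]

theorem le_div_of_sq_le_mul_sub {e : ℕ → ℝ} {K C : ℝ} (hK : 0 ≤ K) (hKC : 2 * K ≤ C)
    (he : ∀ t, 0 ≤ e t) (hrec : ∀ t, e (t + 1) ^ 2 ≤ K * (e t - e (t + 1))) (h1 : e 1 ≤ C) :
    ∀ t, 1 ≤ t → e t ≤ C / t := by
  intro t ht
  induction t, ht using Nat.le_induction with
  | base => simpa using h1
  | succ t ht ih =>
    have ht' : (1 : ℝ) ≤ t := by exact_mod_cast ht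
    have hdec : e (t + 1) ≤ e t := by
      by_contra! hlt
      nlinarith [hrec t, mul_nonneg hK (sub_nonneg.2 hlt.le), pow_pos ((he t).trans_lt hlt) 2]
    have hC : 0 ≤ C := by linarith
    rw [le_div_iff₀ (by positivity) , mul_comm] at ih
    rw [Nat.cast_succ, le_div_iff₀ (by positivity)]
    set a := e t
    set b := e (t + 1)
    have hb : 2 * b ^ 2 + C * b ≤ C * a := by
      nlinarith [hrec t, mul_le_mul_of_nonneg_right hKC (sub_nonneg.2 hdec)]
    have hab : t * (2 * b ^ 2 + C * b) ≤ C ^ 2 := by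
      nlinarith [mul_le_mul_of_nonneg_left ih hC,
        mul_le_mul_of_nonneg_left hb (by positivity : (0 : ℝ) ≤ t)]
    -- `b ↦ 2 b² + C b` is increasing and `t (2 b² + C b) ≥ C²` already at `b = C / (t + 1)`
    by_contra! hcon
    have hu : C ^ 2 < (b * (t + 1)) ^ 2 := by nlinarith
    nlinarith [mul_le_mul_of_nonneg_left hab (by positivity : (0:ℝ) ≤ (t + 1) ^ 2),
      mul_lt_mul_of_pos_left hu (by positivity : (0:ℝ) < 2 * t),
      mul_le_mul_of_nonneg_left hcon.le (by positivity : (0:ℝ) ≤ C * t * (t + 1)),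
      mul_nonneg (sq_nonneg C) (sub_nonneg.2 ht')]

theorem mul_dist_sq_le_of_add_dist_sq_le {X : Type*} [PseudoMetricSpace X] {y : ℕ → X}
    {u : ℕ → ℝ} {L : ℝ} {n : ℕ} (hL : 0 ≤ L)
    (hdec : ∀ i < n, u (i + 1) + L / 2 * dist (y i) (y (i + 1)) ^ 2 ≤ u i) :
    L * dist (y 0) (y n) ^ 2 ≤ 2 * n * (u 0 - u n) := by
  have hsum : L * ∑ i ∈ Finset.range n, dist (y i) (y (i + 1)) ^ 2 ≤ 2 * (u 0 - u n) := by
    rw [← Finset.sum_range_sub' u, Finset.mul_sum, Finset.mul_sum]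
    exact Finset.sum_le_sum fun i hi => by linarith [hdec i (Finset.mem_range.1 hi)]
  have hcs := sq_sum_le_card_mul_sum_sq (s := Finset.range n) (f := fun i => dist (y i) (y (i + 1)))
  rw [Finset.card_range] at hcs
  have htri := pow_le_pow_left₀ dist_nonneg (dist_le_range_sum_dist y n) 2
  nlinarith [mul_le_mul_of_nonneg_left (htri.trans hcs) hL]

section Cycle

variable {E : Type*} [NormedAddCommGroup E] [InnerProductSpace ℝ E] {S : Set E} {f : E → ℝ}
  {g : E → E} {L : ℝ} {y v : ℕ → E} {M : ℕ}

theorem mem_of_isLineSearchStep (hS : Convex ℝ S) (hvS : ∀ j ∈ Set.Icc 1 M, v j ∈ S)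
    (hstep : ∀ i < M, IsLineSearchStep L g (y i) (v (i + 1)) (y (i + 1))) (h0 : y 0 ∈ S) :
    ∀ i ≤ M, y i ∈ S := by
  intro i
  induction i with
  | zero => exact fun _ => h0
  | succ i ih =>
    exact fun hi => (hstep i hi).mem hS (ih (by omega)) (hvS _ ⟨Nat.le_add_left 1 i, hi⟩)

variable [CompleteSpace E]

theorem add_dist_sq_le_of_isLineSearchStep (hS : Convex ℝ S)
    (hgrad : ∀ z ∈ S, HasGradientAt f (g z) z)
    (hlip : ∀ a ∈ S, ∀ b ∈ S, ‖g a - g b‖ ≤ L * ‖a - b‖) (hL : 0 ≤ L)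
    (hvS : ∀ j ∈ Set.Icc 1 M, v j ∈ S)
    (hstep : ∀ i < M, IsLineSearchStep L g (y i) (v (i + 1)) (y (i + 1))) (h0 : y 0 ∈ S) :
    ∀ i < M, f (y (i + 1)) + L / 2 * dist (y i) (y (i + 1)) ^ 2 ≤ f (y i) := fun i hi =>
  (hstep i hi).add_dist_sq_le hS hgrad hlip hL (mem_of_isLineSearchStep hS hvS hstep h0 i hi.le)
    (hvS _ ⟨Nat.le_add_left 1 i, hi⟩)

theorem sq_sub_le_of_isLineSearchStep {D : ℝ} {xstar : E} (hf : ConvexOn ℝ S f)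
    (hgrad : ∀ z ∈ S, HasGradientAt f (g z) z)
    (hlip : ∀ a ∈ S, ∀ b ∈ S, ‖g a - g b‖ ≤ L * ‖a - b‖) (hL : 0 ≤ L)
    (hD : ∀ a ∈ S, ∀ b ∈ S, ‖a - b‖ ≤ D) (hvS : ∀ j ∈ Set.Icc 1 M, v j ∈ S)
    (hxs : xstar ∈ convexHull ℝ (v '' Set.Icc 1 M)) (hmin : ∀ z ∈ S, f xstar ≤ f z)
    (hstep : ∀ i < M, IsLineSearchStep L g (y i) (v (i + 1)) (y (i + 1))) (h0 : y 0 ∈ S) :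
    (f (y M) - f xstar) ^ 2 ≤ 8 * M * L * D ^ 2 * (f (y 0) - f (y M)) := by
  have hS : Convex ℝ S := hf.1
  have hvS' : v '' Set.Icc 1 M ⊆ S := by rintro _ ⟨j, hj, rfl⟩; exact hvS j hj
  have hyS := mem_of_isLineSearchStep hS hvS hstep h0
  have hdec := add_dist_sq_le_of_isLineSearchStep hS hgrad hlip hL hvS hstep h0
  have hanti : AntitoneOn (f ∘ y) (Set.Iic M) :=
    antitoneOn_of_succ_le Set.ordConnected_Iic fun i _ _ hi => by
      simpa using (hdec i (Order.succ_le_iff.1 hi)).trans'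
        (le_add_of_nonneg_right (by positivity))
  obtain ⟨_, ⟨j, hj, rfl⟩, hgap⟩ := hf.exists_mem_inner_gradient_le hvS' h0 (hgrad _ h0) hxs
  obtain ⟨i, rfl⟩ : ∃ i, j = i + 1 := ⟨j - 1, by have := hj.1; omega⟩
  have hiM : i < M := hj.2
  have hvi : v (i + 1) ∈ S := hvS _ hj
  have hclose := hf.inner_gradient_le_inner_gradient_add (w := v (i + 1)) h0 (hyS i hiM.le)
    (hgrad _ (hyS i hiM.le)) (hlip _ (hyS i hiM.le) _ h0)
  have hmove := mul_dist_sq_le_of_add_dist_sq_le (u := fun k => f (y k)) hL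
    fun k hk => hdec k (hk.trans hiM)
  have hfM : f (y M) ≤ f (y (i + 1)) := hanti (Set.mem_Iic.2 hiM) (Set.mem_Iic.2 le_rfl) hiM
  have hfi : f (y (i + 1)) ≤ f (y i) := hanti (Set.mem_Iic.2 hiM.le) (Set.mem_Iic.2 hiM) i.le_succ
  have hf0 : f (y i) ≤ f (y 0) :=
    hanti (Set.mem_Iic.2 (Nat.zero_le M)) (Set.mem_Iic.2 hiM.le) (Nat.zero_le i)
  rw [show (8 * M * L * D ^ 2 : ℝ) = 8 * M * (L * D ^ 2) by ring]
  refine sq_le_of_forall_mul_sub_le_add (P := L * D ^ 2) (δ := f (y i) - f (y M))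
    (Δ := f (y 0) - f (y M)) (W := L * D * ‖y i - y 0‖) (m := M) (by positivity)
    (sub_nonneg.2 (hmin _ (hyS M le_rfl))) (by linarith) (by linarith)
    (by exact_mod_cast Nat.one_le_of_lt hiM) ?_ ?_
  · have hiM' : (i : ℝ) ≤ M := by exact_mod_cast hiM.le
    calc (L * D * ‖y i - y 0‖) ^ 2 = L * D ^ 2 * (L * dist (y 0) (y i) ^ 2) := by
          rw [dist_eq_norm, norm_sub_rev]; ring
      _ ≤ L * D ^ 2 * (2 * i * (f (y 0) - f (y i))) := by gcongr
      _ ≤ L * D ^ 2 * (2 * M * (f (y 0) - f (y M))) := by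
          gcongr
          linarith
      _ = 2 * M * (L * D ^ 2) * (f (y 0) - f (y M)) := by ring
  · intro β hβ
    have hdesc := (hstep i hiM).le_add_mul_inner hS hgrad hlip (hyS i hiM.le) hvi hβ
    have hvD : ‖v (i + 1) - y i‖ ^ 2 ≤ D ^ 2 :=
      pow_le_pow_left₀ (norm_nonneg _) (hD _ hvi _ (hyS i hiM.le)) 2
    have hinner : ⟪g (y i), v (i + 1) - y i⟫ ≤ f xstar - f (y i) + L * D * ‖y i - y 0‖ := by
      have := mul_le_mul_of_nonneg_left (hD _ hvi _ h0) (by positivity : 0 ≤ L * ‖y i - y 0‖)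
      linarith
    linarith [mul_le_mul_of_nonneg_left hinner hβ.1,
      mul_le_mul_of_nonneg_left hvD (by positivity : 0 ≤ L * β ^ 2 / 2)]

end Cycle

theorem stmt13_general {d : ℕ} (M : ℕ)
    (v : ℕ → EuclideanSpace ℝ (Fin d))
    (S : Set (EuclideanSpace ℝ (Fin d)))
    (hSdef : S = convexHull ℝ (v '' Set.Icc 1 M))
    (D L : ℝ) (hL : 0 < L) (hD : ∀ a ∈ S, ∀ b ∈ S, ‖a - b‖ ≤ D)
    (f : EuclideanSpace ℝ (Fin d) → ℝ)
    (g : EuclideanSpace ℝ (Fin d) → EuclideanSpace ℝ (Fin d))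
    (hconv : ConvexOn ℝ S f)
    (hgrad : ∀ y ∈ S, HasGradientAt f (g y) y)
    (hlip : ∀ a ∈ S, ∀ b ∈ S, ‖g a - g b‖ ≤ L * ‖a - b‖)
    (xstar : EuclideanSpace ℝ (Fin d)) (hxs : xstar ∈ S)
    (hmin : ∀ y ∈ S, f xstar ≤ f y)
    (x : ℕ → ℕ → EuclideanSpace ℝ (Fin d)) (hx00 : x 0 0 ∈ S)
    (α : ℕ → ℕ → ℝ)
    (hcycle : ∀ t, x (t + 1) 0 = x t M)
    (hstep : ∀ t, ∀ i, 1 ≤ i → i ≤ M →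
      α t i ∈ Set.Icc (0 : ℝ) 1 ∧
      x t i = x t (i - 1) + α t i • (v i - x t (i - 1)) ∧
      ∀ β ∈ Set.Icc (0 : ℝ) 1,
        α t i * ⟪g (x t (i - 1)), v i - x t (i - 1)⟫ +
          L * (α t i) ^ 2 / 2 * ‖v i - x t (i - 1)‖ ^ 2 ≤
        β * ⟪g (x t (i - 1)), v i - x t (i - 1)⟫ +
          L * β ^ 2 / 2 * ‖v i - x t (i - 1)‖ ^ 2) :
    ∀ t : ℕ, 1 ≤ t →
      f (x t 0) - f xstar ≤
        max (f (x 1 0) - f xstar) (16 * M * L * D ^ 2) / (t : ℝ) := by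
  have hvS : ∀ j ∈ Set.Icc 1 M, v j ∈ S := fun j hj => hSdef ▸ subset_convexHull ℝ _ ⟨j, hj, rfl⟩
  have hxs' : xstar ∈ convexHull ℝ (v '' Set.Icc 1 M) := hSdef ▸ hxs
  have hcyc : ∀ t, ∀ i < M, IsLineSearchStep L g (x t i) (v (i + 1)) (x t (i + 1)) := by
    intro t i hi
    obtain ⟨hα, hx, hopt⟩ := hstep t (i + 1) (Nat.le_add_left 1 i) hi
    simp only [Nat.add_sub_cancel] at hx hopt
    exact ⟨α t (i + 1), hα, hx, isMinOn_iff.2 hopt⟩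
  have hx0 : ∀ t, x t 0 ∈ S := by
    intro t
    induction t with
    | zero => exact hx00
    | succ t ih => exact hcycle t ▸ mem_of_isLineSearchStep hconv.1 hvS (hcyc t) ih M le_rfl
  refine le_div_of_sq_le_mul_sub (e := fun t => f (x t 0) - f xstar) (K := 8 * M * L * D ^ 2)
    (by positivity) ?_ (fun t => sub_nonneg.2 (hmin _ (hx0 t))) (fun t => ?_) (le_max_left _ _)
  · linarith [le_max_right (f (x 1 0) - f xstar) (16 * M * L * D ^ 2)]
  · simpa only [hcycle, sub_sub_sub_cancel_right] using
      sq_sub_le_of_isLineSearchStep hconv hgrad hlip hL.le hD hvS hxs' hmin (hcyc t) (hx0 t)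

theorem stmt13 {d : ℕ} (M : ℕ) (hM : 1 ≤ M)
    (v : ℕ → EuclideanSpace ℝ (Fin d))
    (S : Set (EuclideanSpace ℝ (Fin d)))
    (hSdef : S = convexHull ℝ (v '' Set.Icc 1 M))
    (D L : ℝ) (hL : 0 < L) (hD : ∀ a ∈ S, ∀ b ∈ S, ‖a - b‖ ≤ D)
    (f : EuclideanSpace ℝ (Fin d) → ℝ)
    (g : EuclideanSpace ℝ (Fin d) → EuclideanSpace ℝ (Fin d))
    (hconv : ConvexOn ℝ S f)
    (hgrad : ∀ y ∈ S, HasGradientAt f (g y) y)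
    (hlip : ∀ a ∈ S, ∀ b ∈ S, ‖g a - g b‖ ≤ L * ‖a - b‖)
    (xstar : EuclideanSpace ℝ (Fin d)) (hxs : xstar ∈ S)
    (hmin : ∀ y ∈ S, f xstar ≤ f y)
    (x : ℕ → ℕ → EuclideanSpace ℝ (Fin d)) (hx00 : x 0 0 ∈ S)
    (α : ℕ → ℕ → ℝ)
    (hcycle : ∀ t, x (t + 1) 0 = x t M)
    (hstep : ∀ t, ∀ i, 1 ≤ i → i ≤ M →
      α t i ∈ Set.Icc (0 : ℝ) 1 ∧
      x t i = x t (i - 1) + α t i • (v i - x t (i - 1)) ∧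
      ∀ β ∈ Set.Icc (0 : ℝ) 1,
        α t i * ⟪g (x t (i - 1)), v i - x t (i - 1)⟫ +
          L * (α t i) ^ 2 / 2 * ‖v i - x t (i - 1)‖ ^ 2 ≤
        β * ⟪g (x t (i - 1)), v i - x t (i - 1)⟫ +
          L * β ^ 2 / 2 * ‖v i - x t (i - 1)‖ ^ 2) :
    ∀ t : ℕ, 1 ≤ t →
      f (x t 0) - f xstar ≤
        max (f (x 1 0) - f xstar) (16 * M * L * D ^ 2) / (t : ℝ) :=
  stmt13_general M v S hSdef D L hL hD f g hconv hgrad hlip xstar hxs hmin x hx00 α hcycle hstep
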